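/- arXiv:2507.07889 — 9 statements merged into one kernel-verified Lean document; each statement's English description precedes it below -/
import Mathlib

section
/- Let (S, ∂, ∫) be a commutative integro-differential ring with evaluation E := id − ∫∘∂. Define σ : List S → S by σ([]) = 1 and σ(x :: u) = ∫(x * σ(u)), and define Σsh : List S → List S → S by Σsh([], v) = σ(v), Σsh(u, []) = σ(u), and Σsh(x :: u, y :: v) = ∫(x * Σsh(u, y :: v)) + ∫(y * Σsh(x :: u, v)). Then for all lists f, g, h over S, with n := f.length, m := g.length, l := h.length, the following relation among constants holds: E(Σsh(f,g) * σ(h)) − E(σ(f) * Σsh(g,h)) + Σ_{j=0}^{m−1} ( Σ_{i=0}^{n−1} E(σ(f.drop i) * σ(g.drop j)) * E(Σsh(f.take i, g.take j) * σ(h)) − Σ_{k=0}^{l−1} E(σ(f) * Σsh(g.take j, h.take k)) * E(σ(g.drop j) * σ(h.drop k)) ) = 0. -/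
set_option linter.unusedSectionVars false


/-- Nested integral `σ([f₁, …, fₙ]) = ∫ f₁ ∫ f₂ ⋯ ∫ fₙ` in a ring `S`
with an integration map `intg`. -/
def nestedInt {S : Type*} [CommRing S] (intg : S → S) : List S → S
  | [] => 1
  | x :: u => intg (x * nestedInt intg u)

/-- `Σsh(u, v)`: the nested-integral image of the shuffle product of the tensors
corresponding to the lists `u` and `v`. -/
def nestedIntSh {S : Type*} [CommRing S] (intg : S → S) : List S → List S → S
  | [], v => nestedInt intg v
  | x :: u, [] => nestedInt intg (x :: u)
  | x :: u, y :: v =>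
      intg (x * nestedIntSh intg u (y :: v)) + intg (y * nestedIntSh intg (x :: u) v)
  termination_by u v => u.length + v.length

section Aux
variable {S : Type*} [CommRing S] (der intg : S → S)
    (hder_add : ∀ f g : S, der (f + g) = der f + der g)
    (hleibniz : ∀ f g : S, der (f * g) = der f * g + f * der g)
    (hintg_add : ∀ f g : S, intg (f + g) = intg f + intg g)
    (hsection : ∀ f : S, der (intg f) = f)
    (hintg_lin : ∀ c f : S, der c = 0 → intg (c * f) = c * intg f)
    (E : S → S) (hE : ∀ f : S, E f = f - intg (der f))

lemma nestedInt_nil : nestedInt intg ([] : List S) = 1 := rfl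

lemma nestedInt_cons (x : S) (u : List S) :
    nestedInt intg (x :: u) = intg (x * nestedInt intg u) := rfl

lemma sh_nil_left (v : List S) : nestedIntSh intg [] v = nestedInt intg v := by
  rw [nestedIntSh]

lemma sh_nil_right (u : List S) : nestedIntSh intg u [] = nestedInt intg u := by
  cases u with
  | nil => rw [nestedIntSh]
  | cons x u => rw [nestedIntSh]

lemma sh_cons_cons (x y : S) (u v : List S) :
    nestedIntSh intg (x :: u) (y :: v)
      = intg (x * nestedIntSh intg u (y :: v)) + intg (y * nestedIntSh intg (x :: u) v) := by
  rw [nestedIntSh]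

include der hder_add hsection hE in
lemma derE_zero (a : S) : der (E a) = 0 := by
  have hsub : ∀ a b : S, der (a - b) = der a - der b := fun a b => by
    have := hder_add (a - b) b
    rw [sub_add_cancel] at this
    exact eq_sub_of_add_eq this.symm
  rw [hE, hsub, hsection, sub_self]

include hintg_add in
lemma intg_sum {ι : Type*} (s : Finset ι) (F : ι → S) :
    intg (∑ i ∈ s, F i) = ∑ i ∈ s, intg (F i) :=
  map_sum (AddMonoidHom.mk' intg hintg_add) F s

include der hder_add hleibniz hintg_add hsection hintg_lin hE in
lemma star : ∀ u v : List S, nestedInt intg u * nestedInt intg v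
    = nestedIntSh intg u v
      + ∑ i ∈ Finset.range u.length, ∑ j ∈ Finset.range v.length,
          E (nestedInt intg (u.drop i) * nestedInt intg (v.drop j))
            * nestedIntSh intg (u.take i) (v.take j) := by
  intro u
  induction u with
  | nil =>
    intro v
    simp [sh_nil_left, nestedInt_nil]
  | cons x u' ihu =>
    intro v
    induction v with
    | nil =>
      simp [sh_nil_right, nestedInt_nil]
    | cons y v' ihv =>
      have hEc : ∀ a : S, der (E a) = 0 :=
        derE_zero der intg hder_add hsection E hE
      have hpull : ∀ a c t : S, intg (a * (E c * t)) = E c * intg (a * t) := fun a c t => by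
        rw [show a * (E c * t) = E c * (a * t) by ring, hintg_lin _ _ (hEc c)]
      have hda : der (nestedInt intg (x :: u')) = x * nestedInt intg u' := hsection _
      have hdb : der (nestedInt intg (y :: v')) = y * nestedInt intg v' := hsection _
      have hkey : nestedInt intg (x :: u') * nestedInt intg (y :: v')
          = intg (x * (nestedInt intg u' * nestedInt intg (y :: v')))
            + intg (y * (nestedInt intg (x :: u') * nestedInt intg v'))
            + E (nestedInt intg (x :: u') * nestedInt intg (y :: v')) := by
        have h0 := hE (nestedInt intg (x :: u') * nestedInt intg (y :: v'))
        rw [hleibniz, hda, hdb, mul_assoc,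
          mul_left_comm (nestedInt intg (x :: u')) y, hintg_add] at h0
        linear_combination -h0
      rw [hkey, ihu (y :: v'), ihv]
      simp only [mul_add, hintg_add, Finset.mul_sum, intg_sum intg hintg_add, hpull,
        sh_cons_cons, List.length_cons, Finset.sum_range_succ',
        List.take_succ_cons, List.drop_succ_cons, List.take_zero, List.drop_zero,
        sh_nil_left, sh_nil_right, nestedInt_cons, nestedInt_nil, mul_one,
        Finset.sum_add_distrib]
      abel

include der hder_add hintg_add hE in
lemma E_sub (a b : S) : E (a - b) = E a - E b := by
  have hsub : ∀ a b : S, der (a - b) = der a - der b := fun a b => by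
    have := hder_add (a - b) b
    rw [sub_add_cancel] at this
    exact eq_sub_of_add_eq this.symm
  have hisub : ∀ a b : S, intg (a - b) = intg a - intg b := fun a b => by
    have := hintg_add (a - b) b
    rw [sub_add_cancel] at this
    exact eq_sub_of_add_eq this.symm
  rw [hE, hE, hE, hsub, hisub]; ring

include der hder_add hintg_add hE in
lemma E_sum {ι : Type*} (s : Finset ι) (F : ι → S) :
    E (∑ i ∈ s, F i) = ∑ i ∈ s, E (F i) := by
  have hadd : ∀ a b : S, E (a + b) = E a + E b := fun a b => by
    rw [hE, hE, hE, hder_add, hintg_add]; ring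
  exact map_sum (AddMonoidHom.mk' E hadd) F s

include der intg hleibniz hintg_lin E hE in
lemma E_smul (c x : S) (hc : der c = 0) : E (c * x) = c * E x := by
  rw [hE, hE, hleibniz, hc, zero_mul, zero_add, hintg_lin c _ hc]; ring

end Aux

/-- Relations among the constants arising as evaluations of products of
nested integrals in a commutative integro-differential ring `(S, der, intg)` with
evaluation `E = id - intg ∘ der`. -/
theorem stmt_2 {S : Type*} [CommRing S] (der intg : S → S)
    (hder_add : ∀ f g : S, der (f + g) = der f + der g)
    (hleibniz : ∀ f g : S, der (f * g) = der f * g + f * der g)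
    (hintg_add : ∀ f g : S, intg (f + g) = intg f + intg g)
    (hsection : ∀ f : S, der (intg f) = f)
    (hintg_lin : ∀ c f : S, der c = 0 → intg (c * f) = c * intg f)
    (E : S → S) (hE : ∀ f : S, E f = f - intg (der f))
    (f g h : List S) :
    E (nestedIntSh intg f g * nestedInt intg h)
      - E (nestedInt intg f * nestedIntSh intg g h)
      + ∑ j ∈ Finset.range g.length,
          ((∑ i ∈ Finset.range f.length,
              E (nestedInt intg (f.drop i) * nestedInt intg (g.drop j)) *
                E (nestedIntSh intg (f.take i) (g.take j) * nestedInt intg h))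
            - ∑ k ∈ Finset.range h.length,
              E (nestedInt intg f * nestedIntSh intg (g.take j) (h.take k)) *
                E (nestedInt intg (g.drop j) * nestedInt intg (h.drop k))) = 0 := by
  have hEc : ∀ a : S, der (E a) = 0 := derE_zero der intg hder_add hsection E hE
  have hEs : ∀ a x : S, E (E a * x) = E a * E x :=
    fun a x => E_smul der intg hleibniz hintg_lin E hE (E a) x (hEc a)
  have hEsub := E_sub der intg hder_add hintg_add E hE
  have hEsum : ∀ {ι : Type} (s : Finset ι) (F : ι → S),
      E (∑ i ∈ s, F i) = ∑ i ∈ s, E (F i) :=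
    fun s F => E_sum der intg hder_add hintg_add E hE s F
  have hsh1 : nestedIntSh intg f g
      = nestedInt intg f * nestedInt intg g
        - ∑ i ∈ Finset.range f.length, ∑ j ∈ Finset.range g.length,
            E (nestedInt intg (f.drop i) * nestedInt intg (g.drop j))
              * nestedIntSh intg (f.take i) (g.take j) :=
    eq_sub_of_add_eq (star der intg hder_add hleibniz hintg_add hsection hintg_lin E hE f g).symm
  have hsh2 : nestedIntSh intg g h
      = nestedInt intg g * nestedInt intg h
        - ∑ j ∈ Finset.range g.length, ∑ k ∈ Finset.range h.length,
            E (nestedInt intg (g.drop j) * nestedInt intg (h.drop k))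
              * nestedIntSh intg (g.take j) (h.take k) :=
    eq_sub_of_add_eq (star der intg hder_add hleibniz hintg_add hsection hintg_lin E hE g h).symm
  have e1 : E (nestedIntSh intg f g * nestedInt intg h)
      = E (nestedInt intg f * nestedInt intg g * nestedInt intg h)
        - ∑ j ∈ Finset.range g.length, ∑ i ∈ Finset.range f.length,
            E (nestedInt intg (f.drop i) * nestedInt intg (g.drop j)) *
              E (nestedIntSh intg (f.take i) (g.take j) * nestedInt intg h) := by
    rw [hsh1, sub_mul, hEsub]
    congr 1
    simp only [Finset.sum_mul]
    rw [hEsum]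
    simp only [hEsum]
    rw [Finset.sum_comm]
    refine Finset.sum_congr rfl fun j _ => Finset.sum_congr rfl fun i _ => ?_
    rw [mul_assoc, hEs]
  have e2 : E (nestedInt intg f * nestedIntSh intg g h)
      = E (nestedInt intg f * nestedInt intg g * nestedInt intg h)
        - ∑ j ∈ Finset.range g.length, ∑ k ∈ Finset.range h.length,
            E (nestedInt intg f * nestedIntSh intg (g.take j) (h.take k)) *
              E (nestedInt intg (g.drop j) * nestedInt intg (h.drop k)) := by
    rw [hsh2, mul_sub, ← mul_assoc, hEsub]
    congr 1
    simp only [Finset.mul_sum]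
    rw [hEsum]
    simp only [hEsum]
    refine Finset.sum_congr rfl fun j _ => Finset.sum_congr rfl fun k _ => ?_
    rw [mul_left_comm, hEs, mul_comm]
  rw [e1, e2, Finset.sum_sub_distrib]
  abel
end

section
/- Let (S, ∂, ∫) be a commutative integro-differential ring with evaluation E := id − ∫∘∂, and let x ∈ S. Define I_0 := 1, I_{p+1} := ∫(x * I_p), and c_{p,q} := E(I_p * I_q) for p, q ∈ ℕ. Then for all n, m, l ≥ 1: binom(n+m, m) * c_{n+m, l} − binom(m+l, m) * c_{n, m+l} + Σ_{j=0}^{m−1} ( Σ_{i=0}^{n−1} binom(i+j, j) * c_{n−i, m−j} * c_{i+j, l} − Σ_{k=0}^{l−1} binom(j+k, j) * c_{n, j+k} * c_{m−j, l−k} ) = 0, where binom denotes the binomial coefficient. -/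
/-- `iterInt intg x p = ∫ x ∫ x ⋯ ∫ x` (`p`-fold nested integral of `x`). -/
def iterInt {S : Type*} [CommRing S] (intg : S → S) (x : S) : ℕ → S
  | 0 => 1
  | p + 1 => intg (x * iterInt intg x p)

namespace Stmt3

variable {S : Type*} [CommRing S]

/-- Evaluation `E = id - intg ∘ der`. -/
def Ev (der intg : S → S) (f : S) : S := f - intg (der f)

theorem der_zero (der : S → S) (hder_add : ∀ f g : S, der (f + g) = der f + der g) :
    der 0 = 0 := by
  have h := hder_add 0 0
  rw [add_zero] at h
  exact (left_eq_add.mp h)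

theorem der_one (der : S → S) (hleibniz : ∀ f g : S, der (f * g) = der f * g + f * der g) :
    der (1 : S) = 0 := by
  have h := hleibniz 1 1
  rw [mul_one, mul_one, one_mul] at h
  exact (left_eq_add.mp h)

theorem der_sub (der : S → S) (hder_add : ∀ f g : S, der (f + g) = der f + der g)
    (f g : S) : der (f - g) = der f - der g := by
  have hneg : der (-g) = - der g := by
    have h := hder_add g (-g)
    rw [add_neg_cancel, der_zero der hder_add] at h
    exact (neg_eq_of_add_eq_zero_right h.symm).symm
  have h := hder_add f (-g)
  rw [sub_eq_add_neg, sub_eq_add_neg, h, hneg]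

theorem der_natCast (der : S → S) (hder_add : ∀ f g : S, der (f + g) = der f + der g)
    (hleibniz : ∀ f g : S, der (f * g) = der f * g + f * der g) (k : ℕ) :
    der (k : S) = 0 := by
  induction k with
  | zero => simpa using der_zero der hder_add
  | succ k ih =>
    push_cast
    rw [hder_add, ih, der_one der hleibniz, add_zero]

theorem der_mul_eq_zero (der : S → S)
    (hleibniz : ∀ f g : S, der (f * g) = der f * g + f * der g)
    {a b : S} (ha : der a = 0) (hb : der b = 0) : der (a * b) = 0 := by
  rw [hleibniz, ha, hb, zero_mul, mul_zero, add_zero]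

theorem intg_sum (intg : S → S) (hintg_add : ∀ f g : S, intg (f + g) = intg f + intg g)
    {ι : Type*} (s : Finset ι) (f : ι → S) :
    intg (∑ i ∈ s, f i) = ∑ i ∈ s, intg (f i) := by
  have hz : intg 0 = 0 := by
    have h := hintg_add 0 0
    rw [add_zero] at h
    exact (left_eq_add.mp h)
  classical
  induction s using Finset.cons_induction with
  | empty => simpa using hz
  | cons a s ha ih =>
    rw [Finset.sum_cons, Finset.sum_cons, hintg_add, ih]

theorem Ev_add (der intg : S → S) (hder_add : ∀ f g : S, der (f + g) = der f + der g)
    (hintg_add : ∀ f g : S, intg (f + g) = intg f + intg g) (f g : S) :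
    Ev der intg (f + g) = Ev der intg f + Ev der intg g := by
  unfold Ev
  rw [hder_add, hintg_add]
  ring

theorem Ev_sum (der intg : S → S) (hder_add : ∀ f g : S, der (f + g) = der f + der g)
    (hintg_add : ∀ f g : S, intg (f + g) = intg f + intg g)
    {ι : Type*} (s : Finset ι) (f : ι → S) :
    Ev der intg (∑ i ∈ s, f i) = ∑ i ∈ s, Ev der intg (f i) := by
  classical
  induction s using Finset.cons_induction with
  | empty =>
    unfold Ev
    rw [Finset.sum_empty, Finset.sum_empty, der_zero der hder_add]
    have hz : intg 0 = 0 := by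
      have h := hintg_add 0 0
      rw [add_zero] at h
      exact (left_eq_add.mp h)
    rw [hz, sub_zero]
  | cons a s ha ih =>
    rw [Finset.sum_cons, Finset.sum_cons, Ev_add der intg hder_add hintg_add, ih]

theorem Ev_const_mul (der intg : S → S)
    (hleibniz : ∀ f g : S, der (f * g) = der f * g + f * der g)
    (hintg_lin : ∀ c f : S, der c = 0 → intg (c * f) = c * intg f)
    {κ : S} (f : S) (hκ : der κ = 0) :
    Ev der intg (κ * f) = κ * Ev der intg f := by
  unfold Ev
  have h : der (κ * f) = κ * der f := by rw [hleibniz, hκ, zero_mul, zero_add]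
  rw [h, hintg_lin _ _ hκ]
  ring







/-- one-dimensional Pascal redistribution -/
theorem pascal1 (f : ℕ → S) (i q : ℕ) :
    ∑ j ∈ Finset.range (q + 1), ((i + 1 + j).choose (i + 1) : S) * f j
      = ∑ j ∈ Finset.range (q + 1), ((i + j).choose i : S) * f j
        + ∑ j ∈ Finset.range q, ((i + 1 + j).choose (i + 1) : S) * f (j + 1) := by
  induction q with
  | zero => simp
  | succ q ih =>
    have hnat : (i + 1 + (q + 1)).choose (i + 1)
        = (i + (q + 1)).choose i + (i + 1 + q).choose (i + 1) := by
      rw [show i + 1 + (q + 1) = (i + (q + 1)) + 1 from by omega, Nat.choose_succ_succ]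
      congr 2
      omega
    rw [Finset.sum_range_succ, ih]
    simp only [Finset.sum_range_succ]
    push_cast [hnat]
    ring

/-- Splitting a binomial-weighted double sum via Pascal's rule. -/
theorem sumSplit (g : ℕ → ℕ → S) (p q : ℕ) :
    ∑ i ∈ Finset.range (p + 1), ∑ j ∈ Finset.range (q + 1), ((i + j).choose i : S) * g i j
      = g 0 0
        + ∑ i ∈ Finset.range p, ∑ j ∈ Finset.range (q + 1), ((i + j).choose i : S) * g (i + 1) j
        + ∑ i ∈ Finset.range (p + 1), ∑ j ∈ Finset.range q, ((i + j).choose i : S) * g i (j + 1) := by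
  rw [Finset.sum_range_succ' (fun i => ∑ j ∈ Finset.range (q + 1), ((i + j).choose i : S) * g i j) p]
  rw [Finset.sum_range_succ' (fun i => ∑ j ∈ Finset.range q, ((i + j).choose i : S) * g i (j + 1)) p]
  have h0 : ∑ j ∈ Finset.range (q + 1), ((0 + j).choose 0 : S) * g 0 j
      = (∑ j ∈ Finset.range q, g 0 (j + 1)) + g 0 0 := by
    simp [Finset.sum_range_succ' (fun j => g 0 j) q]
  have h0' : ∑ j ∈ Finset.range q, ((0 + j).choose 0 : S) * g 0 (j + 1)
      = ∑ j ∈ Finset.range q, g 0 (j + 1) := by simp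
  have hrow : ∀ i, ∑ j ∈ Finset.range (q + 1), ((i + 1 + j).choose (i + 1) : S) * g (i + 1) j
      = ∑ j ∈ Finset.range (q + 1), ((i + j).choose i : S) * g (i + 1) j
        + ∑ j ∈ Finset.range q, ((i + 1 + j).choose (i + 1) : S) * g (i + 1) (j + 1) := by
    intro i
    exact pascal1 (fun j => g (i + 1) j) i q
  simp only [hrow, h0, h0']
  rw [Finset.sum_add_distrib]
  ring



theorem rec1 (der intg : S → S)
    (hleibniz : ∀ f g : S, der (f * g) = der f * g + f * der g)
    (hintg_add : ∀ f g : S, intg (f + g) = intg f + intg g)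
    (hsection : ∀ f : S, der (intg f) = f)
    (x : S) (c : ℕ → ℕ → S)
    (hc : ∀ p q : ℕ, c p q = iterInt intg x p * iterInt intg x q
        - intg (der (iterInt intg x p * iterInt intg x q)))
    (p q : ℕ) :
    iterInt intg x (p + 1) * iterInt intg x (q + 1)
      = intg (x * (iterInt intg x p * iterInt intg x (q + 1)))
        + intg (x * (iterInt intg x (p + 1) * iterInt intg x q))
        + c (p + 1) (q + 1) := by
  have hd : der (iterInt intg x (p + 1) * iterInt intg x (q + 1))
      = x * (iterInt intg x p * iterInt intg x (q + 1))
        + x * (iterInt intg x (p + 1) * iterInt intg x q) := by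
    rw [hleibniz]
    have h1 : der (iterInt intg x (p + 1)) = x * iterInt intg x p := hsection _
    have h2 : der (iterInt intg x (q + 1)) = x * iterInt intg x q := hsection _
    rw [h1, h2]
    ring
  have h := hc (p + 1) (q + 1)
  rw [hd, hintg_add] at h
  linear_combination -h

theorem intg_push (der intg : S → S)
    (hintg_add : ∀ f g : S, intg (f + g) = intg f + intg g)
    (hintg_lin : ∀ c f : S, der c = 0 → intg (c * f) = c * intg f)
    (x : S) (κ : S) (hκ : der κ = 0) (k a b : ℕ) (co : ℕ → ℕ → S)
    (hco : ∀ i j : ℕ, der (co i j) = 0) (idx : ℕ → ℕ → ℕ) :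
    intg (x * (κ * iterInt intg x k
        + ∑ i ∈ Finset.range a, ∑ j ∈ Finset.range b, co i j * iterInt intg x (idx i j)))
      = κ * iterInt intg x (k + 1)
        + ∑ i ∈ Finset.range a, ∑ j ∈ Finset.range b, co i j * iterInt intg x (idx i j + 1) := by
  have h1 : x * (κ * iterInt intg x k
        + ∑ i ∈ Finset.range a, ∑ j ∈ Finset.range b, co i j * iterInt intg x (idx i j))
      = κ * (x * iterInt intg x k)
        + ∑ i ∈ Finset.range a, ∑ j ∈ Finset.range b,
            co i j * (x * iterInt intg x (idx i j)) := by
    rw [mul_add, Finset.mul_sum]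
    congr 1
    · ring
    · refine Finset.sum_congr rfl fun i _ => ?_
      rw [Finset.mul_sum]
      exact Finset.sum_congr rfl fun j _ => by ring
  rw [h1, hintg_add, hintg_lin _ _ hκ, intg_sum intg hintg_add]
  congr 1
  refine Finset.sum_congr rfl fun i _ => ?_
  rw [intg_sum intg hintg_add]
  refine Finset.sum_congr rfl fun j _ => ?_
  rw [hintg_lin _ _ (hco i j)]
  rfl

theorem der_c (der intg : S → S)
    (hder_add : ∀ f g : S, der (f + g) = der f + der g)
    (hsection : ∀ f : S, der (intg f) = f)
    (x : S) (c : ℕ → ℕ → S)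
    (hc : ∀ p q : ℕ, c p q = iterInt intg x p * iterInt intg x q
        - intg (der (iterInt intg x p * iterInt intg x q)))
    (p q : ℕ) : der (c p q) = 0 := by
  rw [hc, der_sub der hder_add, hsection, sub_self]

theorem keyA (der intg : S → S)
    (hder_add : ∀ f g : S, der (f + g) = der f + der g)
    (hleibniz : ∀ f g : S, der (f * g) = der f * g + f * der g)
    (hintg_add : ∀ f g : S, intg (f + g) = intg f + intg g)
    (hsection : ∀ f : S, der (intg f) = f)
    (hintg_lin : ∀ c f : S, der c = 0 → intg (c * f) = c * intg f)
    (x : S) (c : ℕ → ℕ → S)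
    (hc : ∀ p q : ℕ, c p q = iterInt intg x p * iterInt intg x q
        - intg (der (iterInt intg x p * iterInt intg x q)))
    (p q : ℕ) :
    iterInt intg x p * iterInt intg x q
      = ((p + q).choose p : S) * iterInt intg x (p + q)
        + ∑ i ∈ Finset.range p, ∑ j ∈ Finset.range q,
            ((i + j).choose i : S) * c (p - i) (q - j) * iterInt intg x (i + j) := by
  have hdc : ∀ a b : ℕ, der (((a + b).choose a : S) * c a b) = 0 := fun a b =>
    der_mul_eq_zero der hleibniz (der_natCast der hder_add hleibniz _)
      (der_c der intg hder_add hsection x c hc a b)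
  induction p generalizing q with
  | zero => simp [iterInt]
  | succ p ihp =>
    induction q with
    | zero => simp [iterInt, Nat.choose_self]
    | succ q ihq =>
      rw [rec1 der intg hleibniz hintg_add hsection x c hc p q, ihp (q + 1), ihq]
      rw [intg_push der intg hintg_add hintg_lin x _
          (der_natCast der hder_add hleibniz _) _ p (q + 1)
          (fun i j => ((i + j).choose i : S) * c (p - i) (q + 1 - j))
          (fun i j => der_mul_eq_zero der hleibniz (der_natCast der hder_add hleibniz _)
            (der_c der intg hder_add hsection x c hc _ _)) (fun i j => i + j)]
      rw [intg_push der intg hintg_add hintg_lin x _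
          (der_natCast der hder_add hleibniz _) _ (p + 1) q
          (fun i j => ((i + j).choose i : S) * c (p + 1 - i) (q - j))
          (fun i j => der_mul_eq_zero der hleibniz (der_natCast der hder_add hleibniz _)
            (der_c der intg hder_add hsection x c hc _ _)) (fun i j => i + j)]
      have hS := sumSplit (fun i j => c (p + 1 - i) (q + 1 - j) * iterInt intg x (i + j)) p q
      have hnat : ((p + 1 + (q + 1)).choose (p + 1) : S)
          = ((p + (q + 1)).choose p : S) + ((p + 1 + q).choose (p + 1) : S) := by
        have h : (p + 1 + (q + 1)).choose (p + 1)
            = (p + (q + 1)).choose p + (p + 1 + q).choose (p + 1) := by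
          rw [show p + 1 + (q + 1) = (p + (q + 1)) + 1 from by omega, Nat.choose_succ_succ]
          congr 2
          omega
        exact_mod_cast congrArg (Nat.cast : ℕ → S) h
      simp only [mul_assoc] at hS ⊢
      rw [hS, hnat]
      simp only [Nat.succ_sub_succ_eq_sub, Nat.sub_zero, Nat.add_zero,
        show (iterInt intg x 0 : S) = 1 from rfl, mul_one,
        show ∀ a b : ℕ, a + 1 + b = a + b + 1 from fun a b => by omega,
        show p + (q + 1) = p + q + 1 from by omega,
        show p + (q + 1) + 1 = p + q + 1 + 1 from by omega,
        show ∀ a b : ℕ, a + (b + 1) = a + b + 1 from fun a b => by omega]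
      ring


theorem c_comm (der intg : S → S) (x : S) (c : ℕ → ℕ → S)
    (hc : ∀ p q : ℕ, c p q = iterInt intg x p * iterInt intg x q
        - intg (der (iterInt intg x p * iterInt intg x q)))
    (p q : ℕ) : c p q = c q p := by
  rw [hc, hc, mul_comm]

theorem evalProd (der intg : S → S)
    (hder_add : ∀ f g : S, der (f + g) = der f + der g)
    (hleibniz : ∀ f g : S, der (f * g) = der f * g + f * der g)
    (hintg_add : ∀ f g : S, intg (f + g) = intg f + intg g)
    (hsection : ∀ f : S, der (intg f) = f)
    (hintg_lin : ∀ c f : S, der c = 0 → intg (c * f) = c * intg f)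
    (x : S) (c : ℕ → ℕ → S)
    (hc : ∀ p q : ℕ, c p q = iterInt intg x p * iterInt intg x q
        - intg (der (iterInt intg x p * iterInt intg x q)))
    (a b L : ℕ) :
    Ev der intg (iterInt intg x a * iterInt intg x b * iterInt intg x L)
      = ((a + b).choose a : S) * c (a + b) L
        + ∑ i ∈ Finset.range a, ∑ j ∈ Finset.range b,
            ((i + j).choose i : S) * c (a - i) (b - j) * c (i + j) L := by
  have hE : ∀ p q : ℕ, Ev der intg (iterInt intg x p * iterInt intg x q) = c p q := by
    intro p q
    rw [Ev]
    exact (hc p q).symm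
  rw [keyA der intg hder_add hleibniz hintg_add hsection hintg_lin x c hc a b]
  rw [add_mul, Finset.sum_mul]
  rw [Ev_add der intg hder_add hintg_add, Ev_sum der intg hder_add hintg_add]
  rw [mul_assoc, Ev_const_mul der intg hleibniz hintg_lin _
    (der_natCast der hder_add hleibniz _), hE]
  congr 1
  refine Finset.sum_congr rfl fun i _ => ?_
  rw [Finset.sum_mul, Ev_sum der intg hder_add hintg_add]
  refine Finset.sum_congr rfl fun j _ => ?_
  rw [show ((i + j).choose i : S) * c (a - i) (b - j) * iterInt intg x (i + j)
        * iterInt intg x L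
      = (((i + j).choose i : S) * c (a - i) (b - j))
        * (iterInt intg x (i + j) * iterInt intg x L) from by ring]
  rw [Ev_const_mul der intg hleibniz hintg_lin _
    (der_mul_eq_zero der hleibniz (der_natCast der hder_add hleibniz _)
      (der_c der intg hder_add hsection x c hc _ _)), hE]

end Stmt3


/-- Relations among the constants `c p q = E (I_p * I_q)` arising as
evaluations of products of nested integrals of a fixed element `x` in a commutative
integro-differential ring `(S, der, intg)` with evaluation `E = id - intg ∘ der`. -/
theorem stmt_3 {S : Type*} [CommRing S] (der intg : S → S)
    (hder_add : ∀ f g : S, der (f + g) = der f + der g)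
    (hleibniz : ∀ f g : S, der (f * g) = der f * g + f * der g)
    (hintg_add : ∀ f g : S, intg (f + g) = intg f + intg g)
    (hsection : ∀ f : S, der (intg f) = f)
    (hintg_lin : ∀ c f : S, der c = 0 → intg (c * f) = c * intg f)
    (x : S) (c : ℕ → ℕ → S)
    (hc : ∀ p q : ℕ, c p q = iterInt intg x p * iterInt intg x q
        - intg (der (iterInt intg x p * iterInt intg x q)))
    (n m l : ℕ) (hn : 1 ≤ n) (hm : 1 ≤ m) (hl : 1 ≤ l) :
    ((n + m).choose m : S) * c (n + m) l - ((m + l).choose m : S) * c n (m + l)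
      + ∑ j ∈ Finset.range m,
          ((∑ i ∈ Finset.range n, ((i + j).choose j : S) * (c (n - i) (m - j) * c (i + j) l))
            - ∑ k ∈ Finset.range l,
                ((j + k).choose j : S) * (c n (j + k) * c (m - j) (l - k))) = 0 := by
  have hB1 := Stmt3.evalProd der intg hder_add hleibniz hintg_add hsection hintg_lin x c hc n m l
  have hB2 := Stmt3.evalProd der intg hder_add hleibniz hintg_add hsection hintg_lin x c hc m l n
  have heq : ((n + m).choose n : S) * c (n + m) l
        + ∑ i ∈ Finset.range n, ∑ j ∈ Finset.range m,
            ((i + j).choose i : S) * c (n - i) (m - j) * c (i + j) l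
      = ((m + l).choose m : S) * c (m + l) n
        + ∑ j ∈ Finset.range m, ∑ k ∈ Finset.range l,
            ((j + k).choose j : S) * c (m - j) (l - k) * c (j + k) n := by
    rw [← hB1, ← hB2]
    rw [show iterInt intg x n * iterInt intg x m * iterInt intg x l
        = iterInt intg x m * iterInt intg x l * iterInt intg x n from by ring]
  have hchoose : ∀ a b : ℕ, ((a + b).choose b : S) = ((a + b).choose a : S) := by
    intro a b
    have h0 := Nat.choose_symm (Nat.le_add_right a b)
    rw [Nat.add_sub_cancel_left] at h0
    exact_mod_cast congrArg (Nat.cast : ℕ → S) h0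
  have e1 : ∑ j ∈ Finset.range m, ∑ i ∈ Finset.range n,
        ((i + j).choose j : S) * (c (n - i) (m - j) * c (i + j) l)
      = ∑ i ∈ Finset.range n, ∑ j ∈ Finset.range m,
          ((i + j).choose i : S) * c (n - i) (m - j) * c (i + j) l := by
    rw [Finset.sum_comm]
    refine Finset.sum_congr rfl fun i _ => Finset.sum_congr rfl fun j _ => ?_
    rw [hchoose i j]
    ring
  have e2 : ∑ j ∈ Finset.range m, ∑ k ∈ Finset.range l,
        ((j + k).choose j : S) * (c n (j + k) * c (m - j) (l - k))
      = ∑ j ∈ Finset.range m, ∑ k ∈ Finset.range l,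
          ((j + k).choose j : S) * c (m - j) (l - k) * c (j + k) n := by
    refine Finset.sum_congr rfl fun j _ => Finset.sum_congr rfl fun k _ => ?_
    rw [Stmt3.c_comm der intg x c hc n (j + k)]
    ring
  rw [Finset.sum_sub_distrib, e1, e2, hchoose n m,
    Stmt3.c_comm der intg x c hc n (m + l)]
  linear_combination heq
end

section
/- Let (S, ∂, ∫) be a commutative integro-differential ring with evaluation E := id − ∫∘∂, and let x ∈ S. Define I_0 := 1, I_{p+1} := ∫(x * I_p), and c_{p,q} := E(I_p * I_q) for p, q ∈ ℕ. Then for all m ≥ 2 and n ≥ 1: m * c_{m,n} = binom(m+n−1, m−1) * c_{1, m+n−1} + Σ_{j=0}^{m−2} Σ_{k=1}^{n−1} binom(j+k, j) * c_{1, j+k} * c_{m−j−1, n−k}, where binom denotes the binomial coefficient. -/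
namespace Stmt4

variable {S : Type*} [CommRing S]

/-- Induced evaluation. -/
def Ev (der intg : S → S) (f : S) : S := f - intg (der f)

section
variable {der intg : S → S} {x : S}

lemma der_zero (hadd : ∀ f g : S, der (f + g) = der f + der g) : der 0 = 0 := by
  have h := hadd 0 0
  rw [add_zero] at h
  exact (left_eq_add.mp h)

lemma der_sub (hadd : ∀ f g : S, der (f + g) = der f + der g) (f g : S) :
    der (f - g) = der f - der g := by
  have h := hadd (f - g) g
  rw [sub_add_cancel] at h
  rw [h]; ring

lemma der_one (hleibniz : ∀ f g : S, der (f * g) = der f * g + f * der g) : der 1 = 0 := by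
  have h := hleibniz 1 1
  simp only [one_mul, mul_one] at h
  exact (left_eq_add.mp h)

lemma der_natCast (hadd : ∀ f g : S, der (f + g) = der f + der g)
    (hleibniz : ∀ f g : S, der (f * g) = der f * g + f * der g) (n : ℕ) :
    der (n : S) = 0 := by
  induction n with
  | zero => simpa using der_zero hadd
  | succ k ih =>
    rw [Nat.cast_succ, hadd, ih, der_one hleibniz, add_zero]

lemma der_const_mul (hadd : ∀ f g : S, der (f + g) = der f + der g)
    (hleibniz : ∀ f g : S, der (f * g) = der f * g + f * der g)
    {a b : S} (ha : der a = 0) (hb : der b = 0) : der (a * b) = 0 := by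
  rw [hleibniz, ha, hb, zero_mul, mul_zero, add_zero]

lemma der_sum (hadd : ∀ f g : S, der (f + g) = der f + der g)
    {ι : Type*} (s : Finset ι) (f : ι → S) :
    der (∑ i ∈ s, f i) = ∑ i ∈ s, der (f i) :=
  map_sum (AddMonoidHom.mk' der hadd) f s

lemma intg_sum (hintg_add : ∀ f g : S, intg (f + g) = intg f + intg g)
    {ι : Type*} (s : Finset ι) (f : ι → S) :
    intg (∑ i ∈ s, f i) = ∑ i ∈ s, intg (f i) :=
  map_sum (AddMonoidHom.mk' intg hintg_add) f s

lemma der_Ev (hadd : ∀ f g : S, der (f + g) = der f + der g)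
    (hsection : ∀ f : S, der (intg f) = f) (f : S) :
    der (Ev der intg f) = 0 := by
  unfold Ev
  rw [der_sub hadd, hsection, sub_self]

lemma Ev_intg (hsection : ∀ f : S, der (intg f) = f) (f : S) :
    Ev der intg (intg f) = 0 := by
  unfold Ev
  rw [hsection, sub_self]

lemma Ev_const_mul (hleibniz : ∀ f g : S, der (f * g) = der f * g + f * der g)
    (hintg_lin : ∀ c f : S, der c = 0 → intg (c * f) = c * intg f)
    {κ : S} (hκ : der κ = 0) (f : S) :
    Ev der intg (κ * f) = κ * Ev der intg f := by
  unfold Ev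
  rw [hleibniz, hκ, zero_mul, zero_add, hintg_lin _ _ hκ]
  ring

lemma Ev_add (hadd : ∀ f g : S, der (f + g) = der f + der g)
    (hintg_add : ∀ f g : S, intg (f + g) = intg f + intg g) (f g : S) :
    Ev der intg (f + g) = Ev der intg f + Ev der intg g := by
  unfold Ev
  rw [hadd, hintg_add]; ring

lemma Ev_sum (hadd : ∀ f g : S, der (f + g) = der f + der g)
    (hintg_add : ∀ f g : S, intg (f + g) = intg f + intg g)
    {ι : Type*} (s : Finset ι) (f : ι → S) :
    Ev der intg (∑ i ∈ s, f i) = ∑ i ∈ s, Ev der intg (f i) := by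
  unfold Ev
  rw [der_sum hadd, intg_sum hintg_add, Finset.sum_sub_distrib]

lemma der_iterInt (hsection : ∀ f : S, der (intg f) = f) (p : ℕ) :
    der (iterInt intg x (p + 1)) = x * iterInt intg x p := hsection _

lemma Ev_iterInt (hsection : ∀ f : S, der (intg f) = f) (p : ℕ) :
    Ev der intg (iterInt intg x (p + 1)) = 0 := Ev_intg hsection _

lemma sum_succ_succ {M : Type*} [AddCommMonoid M] (T : ℕ → ℕ → M) (p q : ℕ) :
    ∑ a ∈ Finset.range (p+1), ∑ b ∈ Finset.range (q+1), T a b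
      = ((∑ a ∈ Finset.range p, ∑ b ∈ Finset.range q, T (a+1) (b+1))
          + ∑ b ∈ Finset.range q, T 0 (b+1))
        + ((∑ a ∈ Finset.range p, T (a+1) 0) + T 0 0) := by
  have h : ∀ a, ∑ b ∈ Finset.range (q+1), T a b
      = (∑ b ∈ Finset.range q, T a (b+1)) + T a 0 := fun a => Finset.sum_range_succ' (T a) q
  rw [Finset.sum_range_succ' _ p]
  simp only [h]
  rw [Finset.sum_add_distrib]
  abel

lemma sum_inner_succ {M : Type*} [AddCommMonoid M] (T : ℕ → ℕ → M) (p q : ℕ) :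
    ∑ a ∈ Finset.range p, ∑ b ∈ Finset.range (q+1), T a b
      = (∑ a ∈ Finset.range p, ∑ b ∈ Finset.range q, T a (b+1))
        + ∑ a ∈ Finset.range p, T a 0 := by
  rw [← Finset.sum_add_distrib]
  exact Finset.sum_congr rfl fun a _ => Finset.sum_range_succ' (T a) q

lemma keyA (hadd : ∀ f g : S, der (f + g) = der f + der g)
    (hleibniz : ∀ f g : S, der (f * g) = der f * g + f * der g)
    (hintg_add : ∀ f g : S, intg (f + g) = intg f + intg g)
    (hsection : ∀ f : S, der (intg f) = f) (p q : ℕ) :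
    iterInt intg x (p + 1) * iterInt intg x (q + 1)
      = intg (x * (iterInt intg x p * iterInt intg x (q + 1)))
        + intg (x * (iterInt intg x (p + 1) * iterInt intg x q))
        + Ev der intg (iterInt intg x (p + 1) * iterInt intg x (q + 1)) := by
  have hd : der (iterInt intg x (p + 1) * iterInt intg x (q + 1))
      = x * (iterInt intg x p * iterInt intg x (q + 1))
        + x * (iterInt intg x (p + 1) * iterInt intg x q) := by
    rw [hleibniz, der_iterInt hsection, der_iterInt hsection]
    ring
  unfold Ev
  rw [hd, hintg_add]
  ring

lemma intg_x_lead (hadd : ∀ f g : S, der (f + g) = der f + der g)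
    (hleibniz : ∀ f g : S, der (f * g) = der f * g + f * der g)
    (hintg_lin : ∀ c f : S, der c = 0 → intg (c * f) = c * intg f)
    (n d : ℕ) :
    intg (x * ((n : S) * iterInt intg x d)) = (n : S) * iterInt intg x (d + 1) := by
  rw [show x * ((n : S) * iterInt intg x d) = (n : S) * (x * iterInt intg x d) by ring,
    hintg_lin _ _ (der_natCast hadd hleibniz n)]
  rfl

lemma intg_x_term (hadd : ∀ f g : S, der (f + g) = der f + der g)
    (hleibniz : ∀ f g : S, der (f * g) = der f * g + f * der g)
    (hsection : ∀ f : S, der (intg f) = f)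
    (hintg_lin : ∀ c f : S, der c = 0 → intg (c * f) = c * intg f)
    (n : ℕ) (f : S) (d : ℕ) :
    intg (x * ((n : S) * (Ev der intg f * iterInt intg x d)))
      = (n : S) * (Ev der intg f * iterInt intg x (d + 1)) := by
  have hκ : der ((n : S) * Ev der intg f) = 0 :=
    der_const_mul hadd hleibniz (der_natCast hadd hleibniz n) (der_Ev hadd hsection f)
  rw [show x * ((n : S) * (Ev der intg f * iterInt intg x d))
      = ((n : S) * Ev der intg f) * (x * iterInt intg x d) by ring,
    hintg_lin _ _ hκ]
  show _ = (n:S) * (Ev der intg f * iterInt intg x (d+1))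
  rw [show iterInt intg x (d+1) = intg (x * iterInt intg x d) from rfl]
  ring

lemma shuffle (hadd : ∀ f g : S, der (f + g) = der f + der g)
    (hleibniz : ∀ f g : S, der (f * g) = der f * g + f * der g)
    (hintg_add : ∀ f g : S, intg (f + g) = intg f + intg g)
    (hsection : ∀ f : S, der (intg f) = f)
    (hintg_lin : ∀ c f : S, der c = 0 → intg (c * f) = c * intg f) :
    ∀ p q : ℕ, iterInt intg x p * iterInt intg x q
      = ((p + q).choose p : S) * iterInt intg x (p + q)
        + ∑ a ∈ Finset.range p, ∑ b ∈ Finset.range q,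
            ((a + b).choose a : S) *
              (Ev der intg (iterInt intg x (p - a) * iterInt intg x (q - b))
                * iterInt intg x (a + b)) := by
  intro p
  induction p with
  | zero =>
    intro q
    simp [iterInt, Nat.zero_add]
  | succ p ihp =>
    intro q
    induction q with
    | zero =>
      simp [iterInt]
    | succ q ihq =>
      rw [keyA hadd hleibniz hintg_add hsection p q, ihp (q+1), ihq]
      rw [mul_add, hintg_add, mul_add, hintg_add]
      simp only [Finset.mul_sum]
      rw [intg_sum hintg_add, intg_sum hintg_add]
      simp only [intg_sum hintg_add]
      rw [intg_x_lead hadd hleibniz hintg_lin, intg_x_lead hadd hleibniz hintg_lin]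
      simp only [intg_x_term hadd hleibniz hsection hintg_lin]
      rw [sum_succ_succ (fun a b => ((a+b).choose a : S) *
            (Ev der intg (iterInt intg x (p+1-a) * iterInt intg x (q+1-b))
              * iterInt intg x (a+b))) p q]
      rw [sum_inner_succ (fun a b => ((a+b).choose a : S) *
            (Ev der intg (iterInt intg x (p-a) * iterInt intg x (q+1-b))
              * iterInt intg x (a+b+1))) p q]
      rw [Finset.sum_range_succ' (fun a => ∑ b ∈ Finset.range q, ((a+b).choose a : S) *
            (Ev der intg (iterInt intg x (p+1-a) * iterInt intg x (q-b))
              * iterInt intg x (a+b+1))) p]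
      have hA : (((p + (q + 1)).choose p : ℕ) : S) * iterInt intg x (p + (q + 1) + 1)
          + (((p + 1 + q).choose (p + 1) : ℕ) : S) * iterInt intg x (p + 1 + q + 1)
          = (((p + 1 + (q + 1)).choose (p + 1) : ℕ) : S) * iterInt intg x (p + 1 + (q + 1)) := by
        have e2 : p + 1 + q = p + (q + 1) := by omega
        have e1 : p + 1 + (q + 1) = p + (q + 1) + 1 := by omega
        rw [e2, e1, Nat.choose_succ_succ]
        push_cast
        ring
      have hP1 : (∑ a ∈ Finset.range p, ∑ b ∈ Finset.range q,
              (((a + (b + 1)).choose a : ℕ) : S) *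
                (Ev der intg (iterInt intg x (p - a) * iterInt intg x (q + 1 - (b + 1))) *
                  iterInt intg x (a + (b + 1) + 1)))
          + (∑ a ∈ Finset.range p, ∑ b ∈ Finset.range q,
              (((a + 1 + b).choose (a + 1) : ℕ) : S) *
                (Ev der intg (iterInt intg x (p + 1 - (a + 1)) * iterInt intg x (q - b)) *
                  iterInt intg x (a + 1 + b + 1)))
          = ∑ a ∈ Finset.range p, ∑ b ∈ Finset.range q,
              (((a + 1 + (b + 1)).choose (a + 1) : ℕ) : S) *
                (Ev der intg (iterInt intg x (p + 1 - (a + 1)) * iterInt intg x (q + 1 - (b + 1))) *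
                  iterInt intg x (a + 1 + (b + 1))) := by
        rw [← Finset.sum_add_distrib]
        refine Finset.sum_congr rfl fun a _ => ?_
        rw [← Finset.sum_add_distrib]
        refine Finset.sum_congr rfl fun b _ => ?_
        have e1 : q + 1 - (b + 1) = q - b := by omega
        have e2 : p + 1 - (a + 1) = p - a := by omega
        have e3 : a + 1 + b = a + (b + 1) := by omega
        have e4 : a + 1 + (b + 1) = a + (b + 1) + 1 := by omega
        rw [e1, e2, e3, e4, Nat.choose_succ_succ]
        push_cast
        ring
      have hP2 : (∑ a ∈ Finset.range p,
              (((a + 0).choose a : ℕ) : S) *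
                (Ev der intg (iterInt intg x (p - a) * iterInt intg x (q + 1 - 0)) *
                  iterInt intg x (a + 0 + 1)))
          = ∑ a ∈ Finset.range p,
              (((a + 1 + 0).choose (a + 1) : ℕ) : S) *
                (Ev der intg (iterInt intg x (p + 1 - (a + 1)) * iterInt intg x (q + 1 - 0)) *
                  iterInt intg x (a + 1 + 0)) := by
        refine Finset.sum_congr rfl fun a _ => ?_
        have e2 : p + 1 - (a + 1) = p - a := by omega
        rw [e2]
        simp
      have hP3 : (∑ b ∈ Finset.range q,
              (((0 + b).choose 0 : ℕ) : S) *
                (Ev der intg (iterInt intg x (p + 1 - 0) * iterInt intg x (q - b)) *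
                  iterInt intg x (0 + b + 1)))
          = ∑ b ∈ Finset.range q,
              (((0 + (b + 1)).choose 0 : ℕ) : S) *
                (Ev der intg (iterInt intg x (p + 1 - 0) * iterInt intg x (q + 1 - (b + 1))) *
                  iterInt intg x (0 + (b + 1))) := by
        refine Finset.sum_congr rfl fun b _ => ?_
        have e1 : q + 1 - (b + 1) = q - b := by omega
        rw [e1]
        simp
      have hP4 : Ev der intg (iterInt intg x (p + 1) * iterInt intg x (q + 1))
          = (((0 + 0).choose 0 : ℕ) : S) *
              (Ev der intg (iterInt intg x (p + 1 - 0) * iterInt intg x (q + 1 - 0)) *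
                iterInt intg x (0 + 0)) := by
        simp [iterInt]
      linear_combination hA + hP1 + hP2 + hP3 + hP4

end
end Stmt4

/-- For the constants `c p q = E (I_p * I_q)` arising as evaluations of
products of nested integrals of a fixed element `x` in a commutative integro-differential
ring `(S, der, intg)` with evaluation `E = id - intg ∘ der`, one has, for `m ≥ 2`, `n ≥ 1`:
`m * c m n = binom (m+n-1) (m-1) * c 1 (m+n-1)
  + Σ_{j=0}^{m-2} Σ_{k=1}^{n-1} binom (j+k) j * c 1 (j+k) * c (m-j-1) (n-k)`. -/
theorem stmt_4 {S : Type*} [CommRing S] (der intg : S → S)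
    (hder_add : ∀ f g : S, der (f + g) = der f + der g)
    (hleibniz : ∀ f g : S, der (f * g) = der f * g + f * der g)
    (hintg_add : ∀ f g : S, intg (f + g) = intg f + intg g)
    (hsection : ∀ f : S, der (intg f) = f)
    (hintg_lin : ∀ c f : S, der c = 0 → intg (c * f) = c * intg f)
    (x : S) (c : ℕ → ℕ → S)
    (hc : ∀ p q : ℕ, c p q = iterInt intg x p * iterInt intg x q
        - intg (der (iterInt intg x p * iterInt intg x q)))
    (m n : ℕ) (hm : 2 ≤ m) (hn : 1 ≤ n) :
    (m : S) * c m n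
      = ((m + n - 1).choose (m - 1) : S) * c 1 (m + n - 1)
        + ∑ j ∈ Finset.range (m - 1), ∑ k ∈ Finset.Ico 1 n,
            ((j + k).choose j : S) * (c 1 (j + k) * c (m - j - 1) (n - k)) := by
  obtain ⟨M, rfl⟩ : ∃ M, m = M + 2 := ⟨m - 2, by omega⟩
  obtain ⟨N, rfl⟩ : ∃ N, n = N + 1 := ⟨n - 1, by omega⟩
  clear hm hn
  have hcE : ∀ p q : ℕ, c p q
      = Stmt4.Ev der intg (iterInt intg x p * iterInt intg x q) := hc
  have hc0 : ∀ q : ℕ, c 0 (q + 1) = 0 := fun q => by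
    rw [hcE, show iterInt intg x 0 = 1 from rfl, one_mul]
    exact Stmt4.Ev_iterInt hsection q
  have hc10 : c 1 0 = 0 := by
    rw [hcE, show iterInt intg x 0 = 1 from rfl, mul_one]
    exact Stmt4.Ev_iterInt hsection 0
  -- way 1
  have h1 := Stmt4.shuffle (x := x) hder_add hleibniz hintg_add hsection hintg_lin (M+1) (N+1)
  have hw1 : Stmt4.Ev der intg (iterInt intg x 1 * (iterInt intg x (M+1) * iterInt intg x (N+1)))
      = (((M+1+(N+1)).choose (M+1) : ℕ) : S) * c 1 (M+1+(N+1))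
        + ∑ a ∈ Finset.range (M+1), ∑ b ∈ Finset.range (N+1),
            (((a+b).choose a : ℕ) : S) * (c (M+1-a) (N+1-b) * c 1 (a+b)) := by
    rw [h1, mul_add, Stmt4.Ev_add hder_add hintg_add]
    congr 1
    · rw [show iterInt intg x 1 * ((((M+1+(N+1)).choose (M+1) : ℕ) : S) * iterInt intg x (M+1+(N+1)))
          = (((M+1+(N+1)).choose (M+1) : ℕ) : S) * (iterInt intg x 1 * iterInt intg x (M+1+(N+1))) from by
            ring,
        Stmt4.Ev_const_mul hleibniz hintg_lin (Stmt4.der_natCast hder_add hleibniz _), ← hcE]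
    · rw [Finset.mul_sum]
      simp only [Finset.mul_sum]
      simp only [Stmt4.Ev_sum hder_add hintg_add]
      refine Finset.sum_congr rfl fun a _ => Finset.sum_congr rfl fun b _ => ?_
      have hκ : der ((((a+b).choose a : ℕ) : S)
          * Stmt4.Ev der intg (iterInt intg x (M+1-a) * iterInt intg x (N+1-b))) = 0 :=
        Stmt4.der_const_mul hder_add hleibniz (Stmt4.der_natCast hder_add hleibniz _)
          (Stmt4.der_Ev hder_add hsection _)
      rw [show iterInt intg x 1 * ((((a+b).choose a : ℕ) : S) *
              (Stmt4.Ev der intg (iterInt intg x (M+1-a) * iterInt intg x (N+1-b)) * iterInt intg x (a+b)))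
          = ((((a+b).choose a : ℕ) : S) * Stmt4.Ev der intg (iterInt intg x (M+1-a) * iterInt intg x (N+1-b)))
              * (iterInt intg x 1 * iterInt intg x (a+b)) from by ring,
        Stmt4.Ev_const_mul hleibniz hintg_lin hκ]
      simp only [← hcE]
      ring
  -- way 2
  have h2 := Stmt4.shuffle (x := x) hder_add hleibniz hintg_add hsection hintg_lin 1 (M+1)
  rw [Finset.sum_range_one] at h2
  simp only [zero_add, Nat.choose_zero_right, Nat.cast_one, one_mul, Nat.sub_zero,
    show (1:ℕ) - 0 = 1 from rfl] at h2
  rw [show 1 + (M+1) = M + 2 from by omega, Nat.choose_one_right] at h2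
  have hw2 : Stmt4.Ev der intg (iterInt intg x 1 * (iterInt intg x (M+1) * iterInt intg x (N+1)))
      = ((M+2 : ℕ) : S) * c (M+2) (N+1)
        + ∑ b ∈ Finset.range (M+1), c 1 (M+1-b) * c b (N+1) := by
    rw [show iterInt intg x 1 * (iterInt intg x (M+1) * iterInt intg x (N+1))
        = (iterInt intg x 1 * iterInt intg x (M+1)) * iterInt intg x (N+1) from by ring,
      h2, add_mul, Finset.sum_mul, Stmt4.Ev_add hder_add hintg_add]
    congr 1
    · rw [show (((M+2 : ℕ) : S) * iterInt intg x (M+2)) * iterInt intg x (N+1)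
          = ((M+2 : ℕ) : S) * (iterInt intg x (M+2) * iterInt intg x (N+1)) from by ring,
        Stmt4.Ev_const_mul hleibniz hintg_lin (Stmt4.der_natCast hder_add hleibniz _), ← hcE]
    · rw [Stmt4.Ev_sum hder_add hintg_add]
      refine Finset.sum_congr rfl fun b _ => ?_
      rw [show (Stmt4.Ev der intg (iterInt intg x 1 * iterInt intg x (M+1-b)) * iterInt intg x b)
              * iterInt intg x (N+1)
          = Stmt4.Ev der intg (iterInt intg x 1 * iterInt intg x (M+1-b))
              * (iterInt intg x b * iterInt intg x (N+1)) from by ring,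
        Stmt4.Ev_const_mul hleibniz hintg_lin (Stmt4.der_Ev hder_add hsection _)]
      simp only [← hcE]
  have hsplit : (∑ a ∈ Finset.range (M+1), ∑ b ∈ Finset.range (N+1),
        (((a+b).choose a : ℕ) : S) * (c (M+1-a) (N+1-b) * c 1 (a+b)))
      = (∑ a ∈ Finset.range (M+1), ∑ b ∈ Finset.range N,
          (((a+(b+1)).choose a : ℕ) : S) * (c (M+1-a) (N+1-(b+1)) * c 1 (a+(b+1))))
        + ∑ a ∈ Finset.range (M+1),
            (((a+0).choose a : ℕ) : S) * (c (M+1-a) (N+1-0) * c 1 (a+0)) :=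
    Stmt4.sum_inner_succ
      (fun a b => (((a+b).choose a : ℕ) : S) * (c (M+1-a) (N+1-b) * c 1 (a+b))) (M+1) N
  have hslice : (∑ a ∈ Finset.range (M+1),
        (((a+0).choose a : ℕ) : S) * (c (M+1-a) (N+1-0) * c 1 (a+0)))
      = ∑ b ∈ Finset.range (M+1), c 1 (M+1-b) * c b (N+1) := by
    have hL : (∑ a ∈ Finset.range (M+1),
          (((a+0).choose a : ℕ) : S) * (c (M+1-a) (N+1-0) * c 1 (a+0)))
        = ∑ a ∈ Finset.range (M+1), c 1 a * c (M+1-a) (N+1) := by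
      refine Finset.sum_congr rfl fun a _ => ?_
      simp only [add_zero, Nat.sub_zero, Nat.choose_self, Nat.cast_one, one_mul]
      ring
    have h1 : (∑ a ∈ Finset.range (M+1+1), c 1 a * c (M+1-a) (N+1))
        = ∑ a ∈ Finset.range (M+1), c 1 a * c (M+1-a) (N+1) := by
      rw [Finset.sum_range_succ, Nat.sub_self, hc0, mul_zero, add_zero]
    have h2 : (∑ a ∈ Finset.range (M+1+1), c 1 a * c (M+1-a) (N+1))
        = ∑ a ∈ Finset.range (M+1), c 1 (a+1) * c (M+1-(a+1)) (N+1) := by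
      rw [Finset.sum_range_succ' (fun a => c 1 a * c (M+1-a) (N+1)) (M+1)]
      rw [hc10, zero_mul, add_zero]
    have h3 : (∑ a ∈ Finset.range (M+1), c 1 (a+1) * c (M+1-(a+1)) (N+1))
        = ∑ b ∈ Finset.range (M+1), c 1 (M+1-b) * c b (N+1) := by
      rw [← Finset.sum_range_reflect (fun a => c 1 (a+1) * c (M+1-(a+1)) (N+1)) (M+1)]
      refine Finset.sum_congr rfl fun b hb => ?_
      simp only [Finset.mem_range] at hb
      have e2 : M + 1 - (M + 1 - 1 - b + 1) = b := by omega
      have e1 : M + 1 - 1 - b + 1 = M + 1 - b := by omega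
      rw [e2, e1]
    rw [hL, ← h1, h2, h3]
  rw [show M+2+(N+1)-1 = M+1+(N+1) from by omega, show M+2-1 = M+1 from by omega]
  have hT : (∑ j ∈ Finset.range (M+1), ∑ k ∈ Finset.Ico 1 (N+1),
        (((j+k).choose j : ℕ) : S) * (c 1 (j+k) * c (M+2-j-1) (N+1-k)))
      = ∑ a ∈ Finset.range (M+1), ∑ b ∈ Finset.range N,
          (((a+(b+1)).choose a : ℕ) : S) * (c (M+1-a) (N+1-(b+1)) * c 1 (a+(b+1))) := by
    refine Finset.sum_congr rfl fun j hj => ?_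
    rw [Finset.sum_Ico_eq_sum_range]
    rw [show N + 1 - 1 = N from by omega]
    refine Finset.sum_congr rfl fun b _ => ?_
    have e1 : (1:ℕ) + b = b + 1 := by omega
    have e2 : M + 2 - j - 1 = M + 1 - j := by omega
    rw [e1, e2]
    ring
  linear_combination hw1 - hw2 + hsplit + hslice - hT
end

section
/- Let K be a commutative ring, A a commutative K-algebra, and F : ℕ → Submodule K A a filtration: F is monotone, ⨆ n, F n = ⊤, 1 ∈ F 0, and F m * F n ≤ F (m+n) for all m, n. Let B ⊆ A and let w : B → ℕ satisfy, for each b ∈ B: b ∈ F (w b), and if w b ≥ 1 then b ∉ F (w b − 1). Assume: for every n ≥ 1 and every nonzero p ∈ MvPolynomial B K that is weighted homogeneous of weighted degree n with respect to the weights w, aeval(Subtype.val)(p) ∉ F (n−1); and for every nonzero p ∈ MvPolynomial B K that is weighted homogeneous of weighted degree 0, aeval(Subtype.val)(p) ≠ 0. Then the family (b : B) ↦ (b : A) is algebraically independent over K. -/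
open MvPolynomial

section aux

variable {K A : Type*} [CommRing K] [CommRing A] [Algebra K A]

lemma aux_prod_mem (F : ℕ → Submodule K A) (hone : (1 : A) ∈ F 0)
    (hmul : ∀ m n : ℕ, F m * F n ≤ F (m + n)) {ι : Type*} (s : Finset ι)
    (x : ι → A) (g : ι → ℕ) (hx : ∀ i ∈ s, x i ∈ F (g i)) :
    (∏ i ∈ s, x i) ∈ F (∑ i ∈ s, g i) := by
  classical
  induction s using Finset.induction with
  | empty => simpa using hone
  | @insert a s hni ih =>
    rw [Finset.prod_insert hni, Finset.sum_insert hni]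
    exact hmul _ _ (Submodule.mul_mem_mul (hx a (Finset.mem_insert_self a s))
      (ih fun i hi => hx i (Finset.mem_insert_of_mem hi)))

lemma aux_pow_mem (F : ℕ → Submodule K A) (hone : (1 : A) ∈ F 0)
    (hmul : ∀ m n : ℕ, F m * F n ≤ F (m + n)) {x : A} {m : ℕ} (hx : x ∈ F m) (k : ℕ) :
    x ^ k ∈ F (k * m) := by
  induction k with
  | zero => simpa using hone
  | succ k ih =>
    have : x ^ (k + 1) = x * x ^ k := by ring
    rw [this, Nat.succ_mul, Nat.add_comm]
    exact hmul _ _ (Submodule.mul_mem_mul hx ih)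

lemma aux_aeval_mem (F : ℕ → Submodule K A) (hmono : Monotone F)
    (hone : (1 : A) ∈ F 0) (hmul : ∀ m n : ℕ, F m * F n ≤ F (m + n))
    (B : Set A) (w : B → ℕ) (hwmem : ∀ b : B, (b : A) ∈ F (w b))
    (p : MvPolynomial B K) (n : ℕ)
    (hp : ∀ d ∈ p.support, Finsupp.weight w d ≤ n) :
    MvPolynomial.aeval (Subtype.val : B → A) p ∈ F n := by
  classical
  rw [p.as_sum, map_sum]
  refine Submodule.sum_mem _ fun d hd => ?_
  rw [aeval_monomial]
  refine hmono (hp d hd) ?_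
  have hprod : (∏ b ∈ d.support, (b : A) ^ d b) ∈ F (∑ b ∈ d.support, d b * w b) :=
    aux_prod_mem F hone hmul _ _ _ fun b _ =>
      aux_pow_mem F hone hmul (hwmem b) (d b)
  have hw : (Finsupp.weight w d : ℕ) = ∑ b ∈ d.support, d b * w b := by
    rw [Finsupp.weight_apply, Finsupp.sum]
    simp [smul_eq_mul]
  rw [hw, Finsupp.prod]
  have : (algebraMap K A) (coeff d p) * ∏ b ∈ d.support, (b : A) ^ d b
      = coeff d p • ∏ b ∈ d.support, (b : A) ^ d b := by
    rw [Algebra.smul_def]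
  rw [this]
  exact Submodule.smul_mem _ _ hprod

end aux

/-- Let `A` be a commutative filtered `K`-algebra with ascending exhaustive
filtration `F`, and `B ⊆ A` a set with degrees `w`. If the images of the elements of `B`
in the associated graded algebra are algebraically independent over `K` (expressed
elementarily via weighted-homogeneous polynomials), then `B` is algebraically independent
in `A` over `K`. -/
theorem stmt_6 {K A : Type*} [CommRing K] [CommRing A] [Algebra K A]
    (F : ℕ → Submodule K A) (hmono : Monotone F) (hexh : (⨆ n, F n) = ⊤)
    (hone : (1 : A) ∈ F 0) (hmul : ∀ m n : ℕ, F m * F n ≤ F (m + n))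
    (B : Set A) (w : B → ℕ)
    (hwmem : ∀ b : B, (b : A) ∈ F (w b))
    (hwdeg : ∀ b : B, 1 ≤ w b → (b : A) ∉ F (w b - 1))
    (hind : ∀ n : ℕ, 1 ≤ n → ∀ p : MvPolynomial B K, p ≠ 0 →
        p.IsWeightedHomogeneous w n →
        MvPolynomial.aeval (Subtype.val : B → A) p ∉ F (n - 1))
    (hind0 : ∀ p : MvPolynomial B K, p ≠ 0 → p.IsWeightedHomogeneous w 0 →
        MvPolynomial.aeval (Subtype.val : B → A) p ≠ 0) :
    AlgebraicIndependent K (fun b : B => (b : A)) := by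
  classical
  rw [algebraicIndependent_iff]
  intro p hp0
  by_contra hp
  set n : ℕ := p.weightedTotalDegree w with hn
  have hle : ∀ d ∈ p.support, Finsupp.weight w d ≤ n :=
    fun d hd => le_weightedTotalDegree w hd
  rcases Nat.eq_zero_or_pos n with h0 | hpos
  · -- degree 0: p is weighted homogeneous of degree 0
    have hhom : p.IsWeightedHomogeneous w 0 := by
      intro d hd
      have := hle d (by rwa [mem_support_iff])
      omega
    exact hind0 p hp hhom hp0
  · set q := weightedHomogeneousComponent w n p with hq
    have hqhom := weightedHomogeneousComponent_isWeightedHomogeneous (w := w) n p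
    -- q ≠ 0
    have hsupp : p.support.Nonempty := by
      rwa [Finset.nonempty_iff_ne_empty, Ne, support_eq_empty, ← Ne]
    obtain ⟨d, hd, hdeq⟩ := Finset.exists_mem_eq_sup p.support hsupp
      (fun s => Finsupp.weight w s)
    have hqne : q ≠ 0 := by
      intro h
      have : coeff d q = coeff d p := by
        rw [hq, coeff_weightedHomogeneousComponent, if_pos (show Finsupp.weight w d = n from hdeq.symm)]
      rw [h, coeff_zero] at this
      exact (mem_support_iff.mp hd) this.symm
    -- the remainder has all weights < n
    have hrem : ∀ e ∈ (p - q).support, Finsupp.weight w e ≤ n - 1 := by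
      intro e he
      have he' : coeff e (p - q) ≠ 0 := mem_support_iff.mp he
      rw [coeff_sub, hq, coeff_weightedHomogeneousComponent] at he'
      by_cases hwe : Finsupp.weight w e = n
      · rw [if_pos hwe, sub_self] at he'; exact absurd rfl he'
      · have hep : e ∈ p.support := by
          rw [mem_support_iff]
          intro h
          rw [if_neg hwe, h, sub_zero] at he'
          exact he' rfl
        have := hle e hep
        omega
    have hmem : MvPolynomial.aeval (Subtype.val : B → A) (p - q) ∈ F (n - 1) :=
      aux_aeval_mem F hmono hone hmul B w hwmem _ _ hrem
    rw [map_sub, hp0, zero_sub, neg_mem_iff] at hmem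
    exact hind n hpos q hqne hqhom hmem
end

section
/- Let C be a commutative Noetherian ring that is a ℚ-algebra. Then for every nonzero formal power series f ∈ C⟦X⟧ there exist k, n ∈ ℕ, a power series g ∈ C⟦X⟧ with f = X^k * g, power series b_0, …, b_n ∈ C⟦X⟧, and a nonzero element c ∈ C such that Σ_{i=0}^{n} b_i * D^[i](g) = PowerSeries.C(c), where D denotes the formal derivative d/dX on C⟦X⟧ and D^[i] its i-th iterate. -/
/-!
Let `I` be the ideal generated by the coefficients `a j` of `f`; by Noetherianity it is generated
by `a 0, …, a N`. Every coefficient of `D^[i] f` lies in `I` and its constant term is `i! * a i`,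
so `D^[i] f = ∑ j, M i j * C (a j)` for a matrix `M` over `A⟦X⟧` whose constant term is the
diagonal matrix of the `i!`. These are units in a `ℚ`-algebra, so `det M` is a unit, and inverting
`M` puts every `C (a j)`, in particular a nonzero one, in the ideal generated by the `D^[i] f`.
-/

open PowerSeries

theorem Submodule.exists_forall_mem_span_image_range {R M : Type*} [Semiring R] [AddCommMonoid M]
    [Module R M] [IsNoetherian R M] (a : ℕ → M) :
    ∃ N, ∀ j, a j ∈ span R (a '' ↑(Finset.range N)) := by
  let J : ℕ →o Submodule R M :=
    ⟨fun n => span R (a '' ↑(Finset.range n)), fun m n hmn =>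
      span_mono (Set.image_mono (by simpa using Finset.range_mono hmn))⟩
  obtain ⟨N, hN⟩ := monotone_stabilizes_iff_noetherian.mpr ‹_› J
  refine ⟨N, fun j => ?_⟩
  rw [show span R _ = J N from rfl, hN (max (j + 1) N) (le_max_right _ _)]
  exact subset_span ⟨j, by simp, rfl⟩

theorem Ideal.span_range_mulVec_le {R ι : Type*} [CommSemiring R] [Fintype ι]
    (M : Matrix ι ι R) (w : ι → R) :
    Ideal.span (Set.range (M.mulVec w)) ≤ Ideal.span (Set.range w) := by
  rw [Ideal.span_le]
  rintro _ ⟨i, rfl⟩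
  exact Ideal.sum_mem _ fun j _ => Ideal.mul_mem_left _ _ (Ideal.subset_span ⟨j, rfl⟩)

theorem Ideal.span_range_mulVec {R ι : Type*} [CommRing R] [Fintype ι] [DecidableEq ι]
    {M : Matrix ι ι R} (hM : IsUnit M.det) (w : ι → R) :
    Ideal.span (Set.range (M.mulVec w)) = Ideal.span (Set.range w) := by
  refine le_antisymm (span_range_mulVec_le M w) ?_
  conv_lhs => rw [← Matrix.one_mulVec w, ← Matrix.nonsing_inv_mul M hM, ← Matrix.mulVec_mulVec]
  exact span_range_mulVec_le _ _

theorem PowerSeries.map_C_span_le_span_of_constantCoeff_eq {A ι : Type*} [CommRing A]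
    [Fintype ι] [DecidableEq ι]
    {s : ι → A} {g : ι → A⟦X⟧} {u : ι → A} (hu : ∀ i, IsUnit (u i))
    (hg₀ : ∀ i, constantCoeff (g i) = u i * s i)
    (hg : ∀ i n, coeff n (g i) ∈ Ideal.span (Set.range s)) :
    Ideal.map C (Ideal.span (Set.range s)) ≤ Ideal.span (Set.range g) := by
  choose r hr using fun i n => Ideal.mem_span_range_iff_exists_fun.mp (hg i n)
  let M : Matrix ι ι A⟦X⟧ := Matrix.of fun i j =>
    mk fun n => if n = 0 then (Pi.single i (u i) : ι → A) j else r i n j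
  have hM : M.mulVec (C ∘ s) = g := by
    funext i
    ext n
    simp only [Matrix.mulVec, dotProduct, map_sum, coeff_mul_C, M, Matrix.of_apply, coeff_mk,
      Function.comp_apply]
    rcases n with _ | n
    · simp [Pi.single_apply, hg₀]
    · simpa using hr i (n + 1)
  have hdet : IsUnit M.det := by
    have hdiag : constantCoeff.mapMatrix M = Matrix.diagonal u := by
      ext i j
      simp [M, Pi.single_apply, Matrix.diagonal_apply, eq_comm]
    rw [isUnit_iff_constantCoeff, RingHom.map_det, hdiag, Matrix.det_diagonal]
    exact IsUnit.prod_univ_iff.mpr hu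
  rw [Ideal.map_span, ← Set.range_comp, ← hM, Ideal.span_range_mulVec hdet]

theorem PowerSeries.C_coeff_mem_span_iterate_derivative {A : Type*} [CommRing A] [Algebra ℚ A]
    (f : A⟦X⟧) {t : Finset ℕ} (ht : ∀ j, coeff j f ∈ Ideal.span ((coeff · f) '' ↑t)) (j : ℕ) :
    C (coeff j f) ∈ Ideal.span ((fun i => (d⁄dX A)^[i] f) '' ↑t) := by
  classical
  rw [Set.image_eq_range] at ht ⊢
  refine map_C_span_le_span_of_constantCoeff_eq (u := fun i : t => ((i : ℕ).factorial : A))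
    (fun i => ?_) (fun i => constantCoeff_iterate_derivative f i) (fun i n => ?_)
    (Ideal.mem_map_of_mem C (ht j))
  · simpa using (IsUnit.mk0 ((i : ℕ).factorial : ℚ) (by positivity)).map (algebraMap ℚ A)
  · rw [coeff_iterate_derivative]
    exact Ideal.mul_mem_left _ _ (ht _)

/-- Over a commutative Noetherian ring `A` containing `ℚ`, for every
nonzero formal power series `f` there are `k, n : ℕ`, a power series `g` with
`f = X ^ k * g`, power series `b 0, …, b n`, and a nonzero constant `c` such that
`Σ_{i=0}^{n} b i * D^[i] g = C c`, where `D` is the formal derivative `d/dX`. -/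
theorem stmt_7 {A : Type*} [CommRing A] [IsNoetherianRing A] [Algebra ℚ A]
    (f : PowerSeries A) (hf : f ≠ 0) :
    ∃ (k n : ℕ) (g : PowerSeries A) (b : ℕ → PowerSeries A) (c : A),
      c ≠ 0 ∧ f = PowerSeries.X ^ k * g ∧
      ∑ i ∈ Finset.range (n + 1), b i * (PowerSeries.derivativeFun)^[i] g
        = PowerSeries.C c := by
  obtain ⟨N, hN⟩ := Submodule.exists_forall_mem_span_image_range (R := A) (coeff · f)
  have hspan (j : ℕ) : coeff j f ∈ Ideal.span ((coeff · f) '' ↑(Finset.range (N + 1))) :=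
    Ideal.span_mono (Set.image_mono (by simp)) (hN j)
  obtain ⟨j, hj⟩ := exists_coeff_ne_zero_iff_ne_zero.mpr hf
  obtain ⟨b, hb, hsum⟩ := (Finsupp.mem_span_image_iff_linearCombination A⟦X⟧).mp
    (C_coeff_mem_span_iterate_derivative f hspan j)
  refine ⟨0, N, f, b, coeff j f, hj, by simp, ?_⟩
  rw [← hsum, Finsupp.linearCombination_apply_of_mem_supported A⟦X⟧ hb]
  -- `b i • _` is `b i * _`, and the deprecated `derivativeFun` unfolds to `d⁄dX A`
  rfl
end

section
/- Let (S, ∂, ∫) be a commutative integro-differential ring with evaluation E := id − ∫∘∂. Let Z ⊆ ker ∂ be any set of constants and let J := Ideal.span Z be the ring ideal of S generated by Z. Then: (i) ∂(J) ⊆ J and ∫(J) ⊆ J, i.e., J is an integro-differential ideal; (ii) for every f ∈ S with ∂ f ∈ J one has f − E f ∈ J; in particular, for every f ∈ S with ∂ f ∈ J there exists a constant c ∈ ker ∂ with f − c ∈ J, so every constant of the quotient ring S/J is the image of a constant of S. -/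
/-!
The Leibniz rule sends `c * f` with `∂ c = 0` to `c * ∂ f`, and `∫` is linear over constants,
so both maps preserve the ideal `J` generated by constants. Since `f - E f = ∫ (∂ f)`, `∂ f ∈ J`
gives `f - E f ∈ J`, and `E f` is a constant because `∂ ∘ ∫ = id`.
-/

namespace Ideal

variable {S : Type*} [CommRing S] {Z : Set S}

theorem map_mem_span_of_leibniz (der : S →+ S)
    (hleibniz : ∀ f g : S, der (f * g) = der f * g + f * der g)
    (hZ : ∀ z ∈ Z, der z ∈ span Z) {f : S} (hf : f ∈ span Z) : der f ∈ span Z := by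
  induction hf using Submodule.span_induction with
  | mem z hz => exact hZ z hz
  | zero => simp
  | add a b _ _ iha ihb => simpa using add_mem iha ihb
  | smul a f hf ih =>
    rw [smul_eq_mul, hleibniz]
    exact add_mem (mul_mem_left _ _ hf) (mul_mem_left _ _ ih)

theorem map_mem_span_of_map_mul (intg : S →+ S)
    (hZ : ∀ c ∈ Z, ∀ f : S, intg (c * f) = c * intg f) {f : S} (hf : f ∈ span Z) :
    intg f ∈ span Z := by
  -- A general element `a * f` of the span is not of the form `c * g` with `c ∈ Z`,
  -- so the induction has to carry an arbitrary left factor.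
  suffices h : ∀ g, intg (g * f) ∈ span Z by simpa using h 1
  induction hf using Submodule.span_induction with
  | mem z hz => exact fun g => by rw [mul_comm, hZ z hz]; exact mul_mem_right _ _ (subset_span hz)
  | zero => simp
  | add a b _ _ iha ihb => exact fun g => by simpa [mul_add] using add_mem (iha g) (ihb g)
  | smul a f _ ih => exact fun g => by simpa [mul_assoc] using ih (g * a)

end Ideal

theorem map_sub_map_map_eq_zero_of_leftInverse {S : Type*} [AddCommGroup S] (der intg : S →+ S)
    (hsection : Function.LeftInverse der intg) (f : S) : der (f - intg (der f)) = 0 := by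
  rw [map_sub, hsection, sub_self]

/-- In a commutative integro-differential ring `(S, der, intg)` with
evaluation `E = id - intg ∘ der`, the ideal generated by any set `Z` of constants is an
integro-differential ideal, and for any `f` with `der f ∈ J` one has `f - E f ∈ J`;
in particular every constant of the quotient `S/J` is the image of a constant of `S`. -/
theorem stmt_13 {S : Type*} [CommRing S] (der intg : S → S)
    (hder_add : ∀ f g : S, der (f + g) = der f + der g)
    (hleibniz : ∀ f g : S, der (f * g) = der f * g + f * der g)
    (hintg_add : ∀ f g : S, intg (f + g) = intg f + intg g)
    (hsection : ∀ f : S, der (intg f) = f)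
    (hintg_lin : ∀ c f : S, der c = 0 → intg (c * f) = c * intg f)
    (Z : Set S) (hZ : ∀ z ∈ Z, der z = 0) :
    (∀ f ∈ Ideal.span Z, der f ∈ Ideal.span Z) ∧
    (∀ f ∈ Ideal.span Z, intg f ∈ Ideal.span Z) ∧
    (∀ f : S, der f ∈ Ideal.span Z → f - (f - intg (der f)) ∈ Ideal.span Z) ∧
    (∀ f : S, der f ∈ Ideal.span Z → ∃ c : S, der c = 0 ∧ f - c ∈ Ideal.span Z) := by
  let D := AddMonoidHom.mk' der hder_add
  let I := AddMonoidHom.mk' intg hintg_add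
  have hintg_mem : ∀ f ∈ Ideal.span Z, intg f ∈ Ideal.span Z := fun f =>
    Ideal.map_mem_span_of_map_mul I fun c hc f => hintg_lin c f (hZ c hc)
  have hsub_eval : ∀ f : S, der f ∈ Ideal.span Z → f - (f - intg (der f)) ∈ Ideal.span Z :=
    fun f hf => by simpa only [sub_sub_cancel] using hintg_mem _ hf
  refine ⟨fun f => Ideal.map_mem_span_of_leibniz D hleibniz
      fun z hz => by simp [D, hZ z hz], hintg_mem, hsub_eval, fun f hf => ?_⟩
  exact ⟨f - intg (der f), map_sub_map_map_eq_zero_of_leftInverse D I hsection f,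
    hsub_eval f hf⟩
end

section
/- Let (S, ∂, ∫) be a commutative integro-differential ring with evaluation E := id − ∫∘∂. Let R be a subring of S with ∂(R) ⊆ R and E(R) ⊆ R, and set C := R ∩ ker ∂. Suppose T is a C-submodule of R (R viewed as a C-module) such that every f ∈ R has a unique decomposition f = d + t with d ∈ ∂(R) (the image of R under ∂) and t ∈ T; write f_T for this unique t ∈ T. Define Q : R → S by Q f := ∫(f − f_T). Then: Q maps R into R; Q is additive and satisfies Q(c*f) = c*(Q f) for all c ∈ C and f ∈ R; ∂(Q(∂ f)) = ∂ f and Q(∂(Q f)) = Q f for all f ∈ R (so Q is a quasi-integration on (R, ∂)); f − ∂(Q f) = f_T for all f ∈ R (the induced projector of Q maps onto T); and f − Q(∂ f) = E f for all f ∈ R (the induced evaluation of Q is the restriction of E). -/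
/-- Let `(S, der, intg)` be a commutative integro-differential ring with
evaluation `E = id - intg ∘ der`, and `R` a subring closed under `der` and `E`, with
constants `C = R ∩ ker der`. If `T` is a `C`-submodule of `R` such that every `f ∈ R` has
a unique decomposition `f = d + t` with `d ∈ der(R)` and `t ∈ T` (`fT f` denoting this
unique `t`), then `Q f := intg (f - fT f)` defines a quasi-integration on `(R, der)` whose
induced projector maps onto `T` and whose induced evaluation is the restriction of `E`. -/
theorem stmt_14 {S : Type*} [CommRing S] (der intg : S → S)
    (hder_add : ∀ f g : S, der (f + g) = der f + der g)
    (hleibniz : ∀ f g : S, der (f * g) = der f * g + f * der g)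
    (hintg_add : ∀ f g : S, intg (f + g) = intg f + intg g)
    (hsection : ∀ f : S, der (intg f) = f)
    (hintg_lin : ∀ c f : S, der c = 0 → intg (c * f) = c * intg f)
    (R : Subring S) (hRder : ∀ f ∈ R, der f ∈ R)
    (hRE : ∀ f ∈ R, f - intg (der f) ∈ R)
    -- `T` is a `C`-submodule of `R`:
    (T : Set S) (hTR : T ⊆ (R : Set S)) (hT0 : (0 : S) ∈ T)
    (hTadd : ∀ x ∈ T, ∀ y ∈ T, x + y ∈ T)
    (hTsmul : ∀ c ∈ R, der c = 0 → ∀ x ∈ T, c * x ∈ T)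
    -- `fT f` is the unique `t ∈ T` with `f - t ∈ der(R)`, for `f ∈ R`:
    (fT : S → S)
    (hfT : ∀ f ∈ R, fT f ∈ T ∧ ∃ g ∈ R, der g = f - fT f)
    (hfT_uniq : ∀ f ∈ R, ∀ t ∈ T, (∃ g ∈ R, der g = f - t) → t = fT f) :
    ∀ Q : S → S, (∀ x : S, Q x = intg (x - fT x)) →
      ((∀ f ∈ R, Q f ∈ R) ∧
        (∀ f ∈ R, ∀ g ∈ R, Q (f + g) = Q f + Q g) ∧
        (∀ c ∈ R, der c = 0 → ∀ f ∈ R, Q (c * f) = c * Q f) ∧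
        (∀ f ∈ R, der (Q (der f)) = der f) ∧
        (∀ f ∈ R, Q (der (Q f)) = Q f) ∧
        (∀ f ∈ R, f - der (Q f) = fT f) ∧
        (∀ f ∈ R, f - Q (der f) = f - intg (der f))) := by
  intro Q hQ
  -- fT of any derivative is 0
  have hfT_der : ∀ g ∈ R, fT (der g) = 0 := by
    intro g hg
    exact (hfT_uniq (der g) (hRder g hg) 0 hT0 ⟨g, hg, by ring⟩).symm
  -- der (Q f) = f - fT f
  have hderQ : ∀ f : S, der (Q f) = f - fT f := by
    intro f; rw [hQ f, hsection]
  have hQR : ∀ f ∈ R, Q f ∈ R := by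
    intro f hf
    obtain ⟨hT, g, hg, hgeq⟩ := hfT f hf
    rw [hQ f, ← hgeq]
    have := hRE g hg
    have : g - (g - intg (der g)) ∈ R := R.sub_mem hg this
    simpa using this
  refine ⟨hQR, ?_, ?_, ?_, ?_, ?_, ?_⟩
  · intro f hf g hg
    obtain ⟨hTf, a, ha, haeq⟩ := hfT f hf
    obtain ⟨hTg, b, hb, hbeq⟩ := hfT g hg
    have hsum : fT (f + g) = fT f + fT g := by
      refine (hfT_uniq (f + g) (R.add_mem hf hg) (fT f + fT g)
        (hTadd _ hTf _ hTg) ⟨a + b, R.add_mem ha hb, ?_⟩).symm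
      rw [hder_add, haeq, hbeq]; ring
    rw [hQ (f + g), hQ f, hQ g, hsum]
    rw [show f + g - (fT f + fT g) = (f - fT f) + (g - fT g) by ring, hintg_add]
  · intro c hc hc0 f hf
    obtain ⟨hTf, a, ha, haeq⟩ := hfT f hf
    have hcf : fT (c * f) = c * fT f := by
      refine (hfT_uniq (c * f) (R.mul_mem hc hf) (c * fT f)
        (hTsmul c hc hc0 _ hTf) ⟨c * a, R.mul_mem hc ha, ?_⟩).symm
      rw [hleibniz, hc0, haeq]; ring
    rw [hQ (c * f), hQ f, hcf, show c * f - c * fT f = c * (f - fT f) by ring,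
      hintg_lin c _ hc0]
  · intro f hf
    rw [hderQ (der f), hfT_der f hf, sub_zero]
  · intro f hf
    have hdQ : der (Q f) ∈ R := by
      rw [hderQ f]; exact R.sub_mem hf (hTR (hfT f hf).1)
    obtain ⟨hTf, a, ha, haeq⟩ := hfT f hf
    have : fT (der (Q f)) = 0 := by
      rw [hderQ f, ← haeq]; exact hfT_der a ha
    rw [hQ (der (Q f)), this, sub_zero, hderQ f, hQ f]
  · intro f hf
    rw [hderQ f]; ring
  · intro f hf
    rw [hQ (der f), hfT_der f hf, sub_zero]
end

section
/- Let (S, ∂, ∫) be a commutative integro-differential ring with evaluation E := id − ∫∘∂, and define σ : List S → S by σ([]) = 1 and σ(x :: u) = ∫(x * σ(u)). Then E is multiplicative, i.e., E(a*b) = E(a)*E(b) for all a, b ∈ S, if and only if E(σ(u) * σ(v)) = 0 for all lists u, v over S with u nonempty. -/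
/-- In a commutative integro-differential ring `(S, der, intg)` with
evaluation `E = id - intg ∘ der`, the evaluation `E` is multiplicative if and only if
`E (σ(u) * σ(v)) = 0` for all lists `u, v` over `S` with `u` nonempty. -/
theorem stmt_15 {S : Type*} [CommRing S] (der intg : S → S)
    (hder_add : ∀ f g : S, der (f + g) = der f + der g)
    (hleibniz : ∀ f g : S, der (f * g) = der f * g + f * der g)
    (hintg_add : ∀ f g : S, intg (f + g) = intg f + intg g)
    (hsection : ∀ f : S, der (intg f) = f)
    (hintg_lin : ∀ c f : S, der c = 0 → intg (c * f) = c * intg f)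
    (E : S → S) (hE : ∀ f : S, E f = f - intg (der f)) :
    (∀ a b : S, E (a * b) = E a * E b) ↔
    (∀ u v : List S, u ≠ [] → E (nestedInt intg u * nestedInt intg v) = 0) := by
  have der0 : der 0 = 0 := by
    have h := hder_add 0 0
    rw [add_zero] at h
    linear_combination -h
  have intg0 : intg 0 = 0 := by
    have h := hintg_lin 0 0 der0
    rw [zero_mul, zero_mul] at h
    exact h
  have der_sub : ∀ f g : S, der (f - g) = der f - der g := by
    intro f g
    have h := hder_add g (f - g)
    rw [add_sub_cancel] at h
    linear_combination -h
  have derE : ∀ f : S, der (E f) = 0 := by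
    intro f
    rw [hE, der_sub, hsection, sub_self]
  have E_int : ∀ f : S, E (intg f) = 0 := by
    intro f
    rw [hE, hsection, sub_self]
  have E_add : ∀ f g : S, E (f + g) = E f + E g := by
    intro f g
    rw [hE, hE, hE, hder_add, hintg_add]
    ring
  have E_const : ∀ c : S, der c = 0 → E c = c := by
    intro c hc
    rw [hE, hc, intg0, sub_zero]
  constructor
  · intro h u v hu
    obtain ⟨x, u', rfl⟩ := List.exists_cons_of_ne_nil hu
    rw [h, show nestedInt intg (x :: u') = intg (x * nestedInt intg u') from rfl,
      E_int, zero_mul]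
  · intro h a b
    have hab : a * b = E a * E b + (E a * intg (der b) +
        (E b * intg (der a) + intg (der a) * intg (der b))) := by
      simp only [hE]
      ring
    have h4 : E (intg (der a) * intg (der b)) = 0 := by
      have := h [der a] [der b] (by simp)
      simpa [nestedInt] using this
    rw [hab, E_add, E_add, E_add,
      ← hintg_lin (E a) (der b) (derE a), ← hintg_lin (E b) (der a) (derE b),
      E_int, E_int, h4,
      E_const (E a * E b) (by rw [hleibniz, derE, derE]; ring)]
    ring
end

section
/- Let (R, ∂) be a commutative differential ring with constants C := ker ∂. Suppose J and T are C-submodules of R (R viewed as a C-module) such that C + J = R and C ∩ J = {0}, and ∂(R) + T = R and ∂(R) ∩ T = {0} (where ∂(R) denotes the image of ∂, a C-submodule). Then there exists a unique quasi-integration Q on (R, ∂) — i.e., a unique additive map Q : R → R with Q(c*f) = c*(Q f) for all c ∈ C and f ∈ R, ∂(Q(∂ f)) = ∂ f and Q(∂(Q f)) = Q f for all f ∈ R — such that Set.range Q = J and {f ∈ R | Q f = 0} = T. -/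
/-- Given a commutative differential ring `(R, der)` with constants
`C = ker der`, and `C`-submodules `J` and `T` of `R` which are direct complements of `C`
and of `der(R)`, respectively, there is a unique quasi-integration `Q` on `(R, der)` with
image `J` and kernel `T`. -/
theorem stmt_17 {R : Type*} [CommRing R] (der : R → R)
    (hder_add : ∀ f g : R, der (f + g) = der f + der g)
    (hleibniz : ∀ f g : R, der (f * g) = der f * g + f * der g)
    -- `J` is a `C`-submodule of `R`:
    (J : Set R) (hJ0 : (0 : R) ∈ J) (hJadd : ∀ x ∈ J, ∀ y ∈ J, x + y ∈ J)
    (hJsmul : ∀ c x : R, der c = 0 → x ∈ J → c * x ∈ J)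
    -- `T` is a `C`-submodule of `R`:
    (T : Set R) (hT0 : (0 : R) ∈ T) (hTadd : ∀ x ∈ T, ∀ y ∈ T, x + y ∈ T)
    (hTsmul : ∀ c x : R, der c = 0 → x ∈ T → c * x ∈ T)
    -- `C + J = R` and `C ∩ J = {0}`:
    (hJ1 : ∀ f : R, ∃ c j : R, der c = 0 ∧ j ∈ J ∧ f = c + j)
    (hJ2 : ∀ x ∈ J, der x = 0 → x = 0)
    -- `der(R) + T = R` and `der(R) ∩ T = {0}`:
    (hT1 : ∀ f : R, ∃ g t : R, t ∈ T ∧ f = der g + t)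
    (hT2 : ∀ t ∈ T, (∃ g : R, der g = t) → t = 0) :
    ∃! Q : R → R,
      (∀ f g : R, Q (f + g) = Q f + Q g) ∧
      (∀ c f : R, der c = 0 → Q (c * f) = c * Q f) ∧
      (∀ f : R, der (Q (der f)) = der f) ∧
      (∀ f : R, Q (der (Q f)) = Q f) ∧
      Set.range Q = J ∧
      {f : R | Q f = 0} = T := by
  -- basic derivation facts
  have der0 : der 0 = 0 := by
    have h := hder_add 0 0
    rw [add_zero] at h
    linear_combination -h
  have derneg : ∀ f : R, der (-f) = - der f := by
    intro f
    have h := hder_add f (-f)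
    rw [add_neg_cancel, der0] at h
    linear_combination -h
  have dersub : ∀ f g : R, der (f - g) = der f - der g := by
    intro f g
    rw [sub_eq_add_neg, hder_add, derneg, sub_eq_add_neg]
  have der1 : der (1 : R) = 0 := by
    have h := hleibniz 1 1
    rw [mul_one, one_mul] at h
    linear_combination -h
  have derneg1 : der (-1 : R) = 0 := by rw [derneg, der1, neg_zero]
  have Jneg : ∀ x ∈ J, -x ∈ J := by
    intro x hx
    have := hJsmul (-1) x derneg1 hx
    simpa using this
  have Tneg : ∀ x ∈ T, -x ∈ T := by
    intro x hx
    have := hTsmul (-1) x derneg1 hx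
    simpa using this
  -- key predicate
  set P : R → R → Prop := fun f j => j ∈ J ∧ f - der j ∈ T with hP
  have hPuniq : ∀ f j j', P f j → P f j' → j = j' := by
    rintro f j j' ⟨hj, hjt⟩ ⟨hj', hjt'⟩
    have ht : der j - der j' ∈ T := by
      have := hTadd _ hjt' _ (Tneg _ hjt)
      have h : (f - der j') + -(f - der j) = der j - der j' := by ring
      rwa [h] at this
    have hz : der j - der j' = 0 := hT2 _ ht ⟨j - j', dersub j j'⟩
    have hjj : j - j' ∈ J := by
      rw [sub_eq_add_neg]; exact hJadd _ hj _ (Jneg _ hj')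
    have := hJ2 _ hjj (by rw [dersub]; exact hz)
    exact sub_eq_zero.mp this
  have hPex : ∀ f : R, ∃ j, P f j := by
    intro f
    obtain ⟨g, t, ht, hft⟩ := hT1 f
    obtain ⟨c, j, hc, hj, hg⟩ := hJ1 g
    refine ⟨j, hj, ?_⟩
    have hdg : der g = der j := by rw [hg, hder_add, hc, zero_add]
    have : f - der j = t := by rw [hft, hdg]; ring
    rwa [this]
  -- define Q
  choose Q hQmem hQT using fun f => hPex f
  have hQeq : ∀ f j, j ∈ J → f - der j ∈ T → Q f = j := by
    intro f j hj ht
    exact hPuniq f _ j ⟨hQmem f, hQT f⟩ ⟨hj, ht⟩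
  have hadd : ∀ f g : R, Q (f + g) = Q f + Q g := by
    intro f g
    refine hQeq _ _ (hJadd _ (hQmem f) _ (hQmem g)) ?_
    have := hTadd _ (hQT f) _ (hQT g)
    have h : (f - der (Q f)) + (g - der (Q g)) = (f + g) - der (Q f + Q g) := by
      rw [hder_add]; ring
    rwa [h] at this
  have hsmul : ∀ c f : R, der c = 0 → Q (c * f) = c * Q f := by
    intro c f hc
    refine hQeq _ _ (hJsmul c _ hc (hQmem f)) ?_
    have hd : der (c * Q f) = c * der (Q f) := by
      rw [hleibniz, hc]; ring
    have := hTsmul c _ hc (hQT f)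
    have h : c * (f - der (Q f)) = c * f - der (c * Q f) := by rw [hd]; ring
    rwa [h] at this
  have hQder : ∀ f : R, Q (der f) = f ∨ True := fun _ => Or.inr trivial
  have hqi1 : ∀ f : R, der (Q (der f)) = der f := by
    intro f
    have ht := hQT (der f)
    have : der f - der (Q (der f)) = 0 :=
      hT2 _ ht ⟨f - Q (der f), dersub f (Q (der f))⟩
    linear_combination -this
  have hqi2 : ∀ f : R, Q (der (Q f)) = Q f := by
    intro f
    refine hQeq _ _ (hQmem f) ?_
    simpa using hT0
  have hQj : ∀ j ∈ J, Q (der j) = j := by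
    intro j hj
    refine hQeq _ _ hj ?_
    simpa using hT0
  have hrange : Set.range Q = J := by
    ext x
    constructor
    · rintro ⟨f, rfl⟩; exact hQmem f
    · intro hx; exact ⟨der x, hQj x hx⟩
  have hker : {f : R | Q f = 0} = T := by
    ext f
    constructor
    · intro hf
      have := hQT f
      rwa [hf, der0, sub_zero] at this
    · intro hf
      refine hQeq _ _ hJ0 ?_
      rwa [der0, sub_zero]
  refine ⟨Q, ⟨hadd, hsmul, hqi1, hqi2, hrange, hker⟩, ?_⟩
  rintro Q' ⟨hadd', hsmul', hqi1', hqi2', hrange', hker'⟩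
  funext f
  have hQ'0 : Q' 0 = 0 := by
    have h := hadd' 0 0
    rw [add_zero] at h
    linear_combination -h
  have hQ'neg : ∀ g : R, Q' (-g) = - Q' g := by
    intro g
    have h := hadd' g (-g)
    rw [add_neg_cancel, hQ'0] at h
    linear_combination -h
  have hQ'sub : ∀ g h : R, Q' (g - h) = Q' g - Q' h := by
    intro g h
    rw [sub_eq_add_neg, hadd', hQ'neg, sub_eq_add_neg]
  have h1 : Q' f ∈ J := hrange' ▸ Set.mem_range_self f
  have h2 : f - der (Q' f) ∈ T := by
    have : Q' (f - der (Q' f)) = 0 := by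
      rw [hQ'sub, hqi2', sub_self]
    rw [← hker']
    exact this
  exact (hQeq f (Q' f) h1 h2).symm
end
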